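/- arXiv:2109.10752 — 3 statements merged into one kernel-verified Lean document; each statement's English description precedes it below -/
import Mathlib

section
/- Let K(z) = z/(1-z)² be the Koebe function, which is a conformal mapping on 𝔻. For every p > 0 and α > -1 with p/(α+2) = 1/2, K does not belong to the weighted Bergman space A_α^p(𝔻). In particular, the inequality p/(α+2) < 1/2 guaranteeing membership of all conformal maps in A_α^p(𝔻) is sharp. -/
open MeasureTheory Filter Set
open scoped ENNReal Real

noncomputable section

/-- `f` is a conformal (injective holomorphic) mapping on the unit disk `𝔻`. -/
def IsConformalOnDisk (f : ℂ → ℂ) : Prop :=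
  Set.InjOn f (Metric.ball (0:ℂ) 1) ∧ DifferentiableOn ℂ f (Metric.ball (0:ℂ) 1)

/-- Membership of `f` in the weighted Bergman space `A_α^p(𝔻)`:
`∫_𝔻 |f(z)|^p (1-|z|²)^α dA(z) < ∞`. -/
def MemBergman (f : ℂ → ℂ) (p α : ℝ) : Prop :=
  (∫⁻ z in Metric.ball (0:ℂ) 1,
    ENNReal.ofReal (‖f z‖ ^ p * (1 - ‖z‖ ^ 2) ^ α)) < ⊤

/-- Membership of `f` in the Hardy space `H^p(𝔻)`:
`sup_{0<r<1} ∫₀^{2π} |f(r e^{it})|^p dt < ∞`. -/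
def MemHardy (f : ℂ → ℂ) (p : ℝ) : Prop :=
  ∃ C : ℝ, ∀ r : ℝ, 0 < r → r < 1 →
    (∫ t in (0:ℝ)..(2 * Real.pi),
      ‖f ((r : ℂ) * Complex.exp ((t : ℂ) * Complex.I))‖ ^ p) ≤ C

/-- The harmonic measure `ω_𝔻(0, E_r)` of `E_r = {ζ ∈ ∂𝔻 : |f(ζ)| > r}`, where the boundary
values of `f` are taken as radial limits. -/
def omegaE (f : ℂ → ℂ) (r : ℝ) : ℝ :=
  (volume {t : ℝ | t ∈ Set.Ico (0:ℝ) (2 * Real.pi) ∧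
      ∃ L : ℂ, Filter.Tendsto (fun s : ℝ => f ((s : ℂ) * Complex.exp ((t : ℂ) * Complex.I)))
        (nhdsWithin (1:ℝ) (Set.Iio 1)) (nhds L) ∧ r < ‖L‖}).toReal / (2 * Real.pi)

/-- The hyperbolic distance `d_𝔻(0, F_r)` from `0` to `F_r = {z ∈ 𝔻 : |f(z)| = r}` in the
unit disk (metric density `2/(1-|z|²)`), valued in `[0,∞]`, with `d = +∞` when `F_r = ∅`. -/
def hypDistF (f : ℂ → ℂ) (r : ℝ) : ℝ≥0∞ :=
  ⨅ (z : ℂ) (_ : z ∈ Metric.ball (0:ℂ) 1 ∧ ‖f z‖ = r),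
    ENNReal.ofReal (Real.log ((1 + ‖z‖) / (1 - ‖z‖)))

/-- `expNegMul c d = e^{-c·d}` for `d ∈ [0,∞]`, with the convention `e^{-c·∞} = 0`. -/
def expNegMul (c : ℝ) (d : ℝ≥0∞) : ℝ :=
  if d = ⊤ then 0 else Real.exp (-(c * d.toReal))

/-- `area(U_r)`, the Lebesgue area of `U_r = {z ∈ 𝔻 : |f(z)| > r}`. -/
def areaU (f : ℂ → ℂ) (r : ℝ) : ℝ :=
  (volume {z : ℂ | z ∈ Metric.ball (0:ℂ) 1 ∧ r < ‖f z‖}).toReal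

/-- The Bergman number `b(f) = sup{ p/(α+2) : p > 0, α > -1, f ∈ A_α^p(𝔻) }`,
valued in `[0,∞]`. -/
def bergmanNumber (f : ℂ → ℂ) : ℝ≥0∞ :=
  sSup {x : ℝ≥0∞ | ∃ p α : ℝ, 0 < p ∧ -1 < α ∧ MemBergman f p α ∧
    x = ENNReal.ofReal (p / (α + 2))}

/-- The Hardy number `h(f) = sup{ p > 0 : f ∈ H^p(𝔻) }`, valued in `[0,∞]`. -/
def hardyNumber (f : ℂ → ℂ) : ℝ≥0∞ :=
  sSup {x : ℝ≥0∞ | ∃ p : ℝ, 0 < p ∧ MemHardy f p ∧ x = ENNReal.ofReal p}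

/-- `M(t) = max_{|z| = t} |f(z)|`. -/
def maxMod (f : ℂ → ℂ) (t : ℝ) : ℝ :=
  sSup ((fun z => ‖f z‖) '' Metric.sphere (0:ℂ) t)

/-- `ψ(r) = area(f(D(0,r)))`, the Lebesgue area of the image of the disk of radius `r`. -/
def psiArea (f : ℂ → ℂ) (r : ℝ) : ℝ :=
  (volume (f '' Metric.ball (0:ℂ) r)).toReal

/-! On the triangle `{1/2 ≤ Re z < 1, |Im z| ≤ 1 - Re z}` at the boundary point `1` one has
`|K z| ≥ (4 (1 - Re z)²)⁻¹` and `1 - Re z ≤ 1 - |z|² ≤ 2 (1 - Re z)`, so the Bergman integrand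
of `K` is bounded below by a multiple of `(1 - Re z)^(α - 2p) = (1 - Re z)⁻²`. The triangle
contains the disjoint squares `(1 - 2s, 1 - s) × (0, s)`, `s = 2^-(n+2)`, on each of which
`(1 - Re z)⁻²` integrates to at least `1/4`; hence the integral diverges.
Injectivity of `K` on the disk comes from `z (1 - w)² - w (1 - z)² = (z - w) (1 - z w)`. -/

open Complex

theorem Complex.volume_reProdIm (s t : Set ℝ) : volume (s ×ℂ t) = volume s * volume t := by
  change volume (measurableEquivRealProd ⁻¹' (s ×ˢ t)) = _
  rw [volume_preserving_equiv_real_prod.measure_preimage_equiv, Measure.volume_eq_prod,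
    Measure.prod_prod]

theorem injOn_koebe :
    InjOn (fun z : ℂ => z / (1 - z) ^ 2) (Metric.ball (0 : ℂ) 1) := by
  intro z hz w hw hzw
  rw [mem_ball_zero_iff] at hz hw
  have hz1 : (1 : ℂ) - z ≠ 0 := sub_ne_zero.mpr fun h => by simp [← h] at hz
  have hw1 : (1 : ℂ) - w ≠ 0 := sub_ne_zero.mpr fun h => by simp [← h] at hw
  have hzw1 : (1 : ℂ) - z * w ≠ 0 := sub_ne_zero.mpr fun h => by
    have : ‖z * w‖ < 1 := by
      rw [norm_mul]; exact mul_lt_one_of_nonneg_of_lt_one_left (norm_nonneg z) hz hw.le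
    simp [← h] at this
  simp only [div_eq_div_iff (pow_ne_zero 2 hz1) (pow_ne_zero 2 hw1)] at hzw
  have key : (z - w) * (1 - z * w) = 0 := by linear_combination hzw
  exact sub_eq_zero.mp ((mul_eq_zero.mp key).resolve_right hzw1)

theorem differentiableOn_koebe :
    DifferentiableOn ℂ (fun z : ℂ => z / (1 - z) ^ 2) (Metric.ball (0 : ℂ) 1) := by
  intro z hz
  rw [mem_ball_zero_iff] at hz
  have hz1 : (1 : ℂ) - z ≠ 0 := sub_ne_zero.mpr fun h => by simp [← h] at hz
  fun_prop (disch := exact pow_ne_zero 2 hz1)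

theorem min_one_two_rpow_mul_rpow_le {d t : ℝ} (α : ℝ) (hd : 0 < d) (hdt : d ≤ t)
    (ht : t ≤ 2 * d) : min 1 (2 ^ α) * d ^ α ≤ t ^ α := by
  rcases le_total 0 α with hα | hα
  · calc min 1 (2 ^ α) * d ^ α ≤ 1 * d ^ α := by gcongr; exact min_le_left _ _
      _ ≤ t ^ α := by rw [one_mul]; exact Real.rpow_le_rpow hd.le hdt hα
  · calc min 1 (2 ^ α) * d ^ α ≤ 2 ^ α * d ^ α := by gcongr; exact min_le_right _ _
      _ = (2 * d) ^ α := (Real.mul_rpow zero_le_two hd.le).symm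
      _ ≤ t ^ α := Real.rpow_le_rpow_of_nonpos (hd.trans_le hdt) ht hα

def stolzTriangle : Set ℂ := {z | 1 / 2 ≤ z.re ∧ z.re < 1 ∧ |z.im| ≤ 1 - z.re}

theorem measurableSet_stolzTriangle : MeasurableSet stolzTriangle := by
  unfold stolzTriangle; measurability

theorem Complex.one_sub_norm_sq_le_two_mul_one_sub_re (z : ℂ) :
    1 - ‖z‖ ^ 2 ≤ 2 * (1 - z.re) := by
  rw [Complex.sq_norm, Complex.normSq_apply]
  nlinarith [sq_nonneg (1 - z.re), mul_self_nonneg z.im]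

theorem one_sub_re_le_one_sub_norm_sq {z : ℂ} (hz : z ∈ stolzTriangle) :
    1 - z.re ≤ 1 - ‖z‖ ^ 2 := by
  obtain ⟨hre, hre1, him⟩ := hz
  have him_sq : z.im * z.im ≤ (1 - z.re) ^ 2 := by
    rw [← sq, ← sq_abs]; gcongr
  rw [Complex.sq_norm, Complex.normSq_apply]
  nlinarith [mul_nonneg (by linarith : 0 ≤ 2 * z.re - 1) (by linarith : 0 ≤ 1 - z.re)]

theorem stolzTriangle_subset_ball : stolzTriangle ⊆ Metric.ball (0 : ℂ) 1 := by
  intro z hz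
  have := one_sub_re_le_one_sub_norm_sq hz
  rw [mem_ball_zero_iff, ← sq_lt_one_iff₀ (norm_nonneg z)]
  linarith [hz.2.1]

theorem inv_four_mul_sq_le_norm_koebe {z : ℂ} (hz : z ∈ stolzTriangle) :
    (4 * (1 - z.re) ^ 2)⁻¹ ≤ ‖z / (1 - z) ^ 2‖ := by
  obtain ⟨hre, hre1, him⟩ := hz
  have hd : 0 < 1 - z.re := sub_pos.mpr hre1
  have h1z : ‖1 - z‖ ^ 2 ≤ 2 * (1 - z.re) ^ 2 := by
    have : z.im ^ 2 ≤ (1 - z.re) ^ 2 := by rw [← sq_abs]; gcongr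
    rw [Complex.sq_norm, Complex.normSq_apply, sub_re, sub_im, one_re, one_im]
    nlinarith
  have h1z_pos : 0 < ‖1 - z‖ ^ 2 := by
    have : (1 : ℂ) - z ≠ 0 := fun h => by simp [← sub_eq_zero.mp h] at hre1
    positivity
  rw [norm_div, norm_pow, le_div_iff₀ h1z_pos]
  calc (4 * (1 - z.re) ^ 2)⁻¹ * ‖1 - z‖ ^ 2
        ≤ (4 * (1 - z.re) ^ 2)⁻¹ * (2 * (1 - z.re) ^ 2) := by gcongr
    _ = 1 / 2 := by field_simp; ring
    _ ≤ ‖z‖ := hre.trans (re_le_norm z)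

theorem le_norm_koebe_rpow_mul_one_sub_norm_sq_rpow {p : ℝ} (α : ℝ) (hp : 0 ≤ p) {z : ℂ}
    (hz : z ∈ stolzTriangle) :
    4 ^ (-p) * min 1 (2 ^ α) * (1 - z.re) ^ (α - 2 * p) ≤
      ‖z / (1 - z) ^ 2‖ ^ p * (1 - ‖z‖ ^ 2) ^ α := by
  have hd : 0 < 1 - z.re := sub_pos.mpr hz.2.1
  have hK : 4 ^ (-p) * (1 - z.re) ^ (-2 * p) ≤ ‖z / (1 - z) ^ 2‖ ^ p := by
    calc 4 ^ (-p) * (1 - z.re) ^ (-2 * p) = (4 * (1 - z.re) ^ 2)⁻¹ ^ p := by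
          rw [Real.inv_rpow (by positivity), ← Real.rpow_neg (by positivity),
            Real.mul_rpow (by norm_num) (by positivity), ← Real.rpow_natCast,
            ← Real.rpow_mul hd.le]
          push_cast; ring_nf
      _ ≤ ‖z / (1 - z) ^ 2‖ ^ p := by gcongr; exact inv_four_mul_sq_le_norm_koebe hz
  have hW : min 1 (2 ^ α) * (1 - z.re) ^ α ≤ (1 - ‖z‖ ^ 2) ^ α :=
    min_one_two_rpow_mul_rpow_le α hd (one_sub_re_le_one_sub_norm_sq hz)
      (one_sub_norm_sq_le_two_mul_one_sub_re z)
  calc 4 ^ (-p) * min 1 (2 ^ α) * (1 - z.re) ^ (α - 2 * p)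
      = (4 ^ (-p) * (1 - z.re) ^ (-2 * p)) * (min 1 (2 ^ α) * (1 - z.re) ^ α) := by
        rw [show α - 2 * p = -2 * p + α by ring, Real.rpow_add hd]; ring
    _ ≤ ‖z / (1 - z) ^ 2‖ ^ p * (1 - ‖z‖ ^ 2) ^ α := by gcongr

def boxNearOne (s : ℝ) : Set ℂ := Ioo (1 - 2 * s) (1 - s) ×ℂ Ioo 0 s

theorem measurableSet_boxNearOne (s : ℝ) : MeasurableSet (boxNearOne s) :=
  (measurable_re measurableSet_Ioo).inter (measurable_im measurableSet_Ioo)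

theorem volume_boxNearOne (s : ℝ) :
    volume (boxNearOne s) = ENNReal.ofReal s * ENNReal.ofReal s := by
  rw [boxNearOne, volume_reProdIm, Real.volume_Ioo, Real.volume_Ioo]
  ring_nf

theorem boxNearOne_subset_stolzTriangle {s : ℝ} (hs : s ≤ 1 / 4) :
    boxNearOne s ⊆ stolzTriangle := by
  rintro z ⟨⟨hre, hre'⟩, him, him'⟩
  exact ⟨by linarith, by linarith, by rw [abs_of_pos him]; linarith⟩

theorem disjoint_boxNearOne {s t : ℝ} (h : 2 * t ≤ s) :
    Disjoint (boxNearOne s) (boxNearOne t) :=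
  Set.disjoint_left.mpr fun _ hs ht => by linarith [hs.1.2, ht.1.1]

theorem ofReal_quarter_le_setLIntegral_boxNearOne {s : ℝ} (hs : 0 < s) :
    ENNReal.ofReal (1 / 4) ≤ ∫⁻ z in boxNearOne s, ENNReal.ofReal ((1 - z.re) ^ (-2 : ℝ)) := by
  have hlow : ∀ z ∈ boxNearOne s, ENNReal.ofReal ((2 * s) ^ (-2 : ℝ)) ≤
      ENNReal.ofReal ((1 - z.re) ^ (-2 : ℝ)) := fun z ⟨⟨hre, hre'⟩, _⟩ =>
    ENNReal.ofReal_le_ofReal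
      (Real.rpow_le_rpow_of_nonpos (by linarith) (by linarith) (by norm_num))
  calc ENNReal.ofReal (1 / 4)
        = ENNReal.ofReal ((2 * s) ^ (-2 : ℝ)) * volume (boxNearOne s) := by
        rw [volume_boxNearOne, ← mul_assoc, ← ENNReal.ofReal_mul (by positivity),
          ← ENNReal.ofReal_mul (by positivity), Real.rpow_neg (by positivity), Real.rpow_two]
        congr 1
        field_simp
        ring
    _ = ∫⁻ _ in boxNearOne s, ENNReal.ofReal ((2 * s) ^ (-2 : ℝ)) := (setLIntegral_const _ _).symm
    _ ≤ _ := setLIntegral_mono' (measurableSet_boxNearOne s) hlow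

theorem setLIntegral_stolzTriangle_one_sub_re_rpow_neg_two :
    ∫⁻ z in stolzTriangle, ENNReal.ofReal ((1 - z.re) ^ (-2 : ℝ)) = ⊤ := by
  set s : ℕ → ℝ := fun n => 2⁻¹ ^ (n + 2)
  have hdisj : Pairwise (Function.onFun Disjoint fun n => boxNearOne (s n)) := by
    refine pairwise_disjoint_on _ |>.mpr fun m n hmn => disjoint_boxNearOne ?_
    calc 2 * s n = 2⁻¹ ^ (n + 1) := by simp only [s, pow_succ]; ring
      _ ≤ s m := pow_le_pow_of_le_one (by norm_num) (by norm_num) (by omega)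
  refine top_le_iff.mp ?_
  calc ⊤ = ∑' _ : ℕ, ENNReal.ofReal (1 / 4) :=
        (ENNReal.tsum_const_eq_top_of_ne_zero (by simp)).symm
    _ ≤ ∑' n, ∫⁻ z in boxNearOne (s n), ENNReal.ofReal ((1 - z.re) ^ (-2 : ℝ)) :=
        ENNReal.tsum_le_tsum fun n => ofReal_quarter_le_setLIntegral_boxNearOne (by positivity)
    _ = ∫⁻ z in ⋃ n, boxNearOne (s n), ENNReal.ofReal ((1 - z.re) ^ (-2 : ℝ)) :=
        (lintegral_iUnion (fun n => measurableSet_boxNearOne _) hdisj _).symm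
    _ ≤ _ := lintegral_mono_set <| iUnion_subset fun n => boxNearOne_subset_stolzTriangle <|
        (pow_le_pow_of_le_one (by norm_num) (by norm_num) (by omega : 2 ≤ n + 2)).trans_eq
          (by norm_num)

/-- the Koebe function `K(z) = z/(1-z)²` is conformal on `𝔻` and, for every
`p > 0`, `α > -1` with `p/(α+2) = 1/2`, it does not belong to `A_α^p(𝔻)`; hence the
bound `p/(α+2) < 1/2` is sharp. -/
theorem koebe_not_memBergman_at_half :
    IsConformalOnDisk (fun z : ℂ => z / (1 - z) ^ 2) ∧
      ∀ p α : ℝ, 0 < p → -1 < α → p / (α + 2) = 1 / 2 →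
        ¬ MemBergman (fun z : ℂ => z / (1 - z) ^ 2) p α := by
  refine ⟨⟨injOn_koebe, differentiableOn_koebe⟩, fun p α hp _ hhalf hmem => ?_⟩
  have hα : α - 2 * p = -2 := by
    have : α + 2 ≠ 0 := fun h => by simp [h] at hhalf
    field_simp at hhalf
    linarith
  set c : ℝ := 4 ^ (-p) * min 1 (2 ^ α)
  have hc : 0 < c := by positivity
  refine hmem.ne (top_le_iff.mp ?_)
  calc ⊤ = ENNReal.ofReal c *
        ∫⁻ z in stolzTriangle, ENNReal.ofReal ((1 - z.re) ^ (-2 : ℝ)) := by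
        rw [setLIntegral_stolzTriangle_one_sub_re_rpow_neg_two,
          ENNReal.mul_top (ENNReal.ofReal_pos.mpr hc).ne']
    _ = ∫⁻ z in stolzTriangle, ENNReal.ofReal (c * (1 - z.re) ^ (α - 2 * p)) := by
        rw [hα, ← lintegral_const_mul' _ _ ENNReal.ofReal_ne_top]
        simp_rw [ENNReal.ofReal_mul hc.le]
    _ ≤ ∫⁻ z in stolzTriangle, ENNReal.ofReal (‖z / (1 - z) ^ 2‖ ^ p * (1 - ‖z‖ ^ 2) ^ α) :=
        setLIntegral_mono' measurableSet_stolzTriangle fun z hz =>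
          ENNReal.ofReal_le_ofReal (le_norm_koebe_rpow_mul_one_sub_norm_sq_rpow α hp.le hz)
    _ ≤ _ := lintegral_mono_set stolzTriangle_subset_ball
end
end

section
/- Let p > 0 and α > -1, and suppose f is a conformal mapping on 𝔻 belonging to A_α^p(𝔻). Then (1) lim_{r→1⁻} (1-r)·M(r)^{p/(α+2)} = 0, and (2) lim_{r→1⁻} (1-r)·ψ(r)^{p/(2(α+2))} = 0. -/
/-!
For holomorphic `F` and `p > 0`, `|F|^p` satisfies the sub-mean value property: Jensen's formula
gives `log |F c| ≤` the circle average of `log |F|`, and convexity of `exp` upgrades this to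
`|F c|^p ≤` the circle average of `|F|^p`; integrating over radii gives the area version.
Apply it on the disc of radius `(1 - r)/2` around a point of `|z| = r` where `|f|` attains `M(r)`.
On that disc `1 - |w|²` is comparable to `1 - r`, so `(1 - r)^(α+2) M(r)^p` is bounded by a
constant times the `A^p_α`-integral over the annulus `(3r - 1)/2 < |w| < 1`, which tends to `0`.
Finally `ψ(r) ≤ π M(r)²` by the maximum modulus principle.
-/

open MeasureTheory Filter Set
open scoped ENNReal Real

noncomputable section

open Metric Real Topology

theorem ConvexOn.map_circleAverage_le {g : ℝ → ℝ} (hg : ConvexOn ℝ univ g) {f : ℂ → ℝ} {c : ℂ}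
    {R : ℝ} (hf : CircleIntegrable f c R) (hgf : CircleIntegrable (g ∘ f) c R) :
    g (circleAverage f c R) ≤ circleAverage (g ∘ f) c R := by
  simp only [circleAverage_eq_intervalAverage]
  refine hg.map_set_average_le (by simpa using hg.continuousOn_interior) isClosed_univ
    (by simp) (by simp [ENNReal.mul_eq_top]) (by simp) (intervalIntegrable_iff.1 hf)
    (intervalIntegrable_iff.1 hgf)

theorem AnalyticOnNhd.log_norm_le_circleAverage {F : ℂ → ℂ} {c : ℂ} {R : ℝ} (hR : R ≠ 0)
    (hF : AnalyticOnNhd ℂ F (closedBall c |R|)) (hc : F c ≠ 0) :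
    Real.log ‖F c‖ ≤ circleAverage (Real.log ‖F ·‖) c R := by
  rw [hF.circleAverage_log_norm hR hc, le_add_iff_nonneg_left]
  refine finsum_nonneg fun u ↦ ?_
  rcases eq_or_ne u c with rfl | huc
  · simp
  by_cases hu : u ∈ closedBall c |R|
  · refine mul_nonneg (mod_cast MeromorphicOn.AnalyticOnNhd.divisor_nonneg hF u) ?_
    have : 0 < ‖c - u‖ := norm_pos_iff.2 (sub_ne_zero.2 huc.symm)
    rw [← log_abs, abs_mul, abs_inv, abs_norm, ← div_eq_mul_inv]
    exact log_nonneg ((one_le_div this).2 (by simpa [dist_eq_norm'] using hu))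
  · simp [hu]

theorem AnalyticOnNhd.norm_rpow_le_circleAverage {F : ℂ → ℂ} {c : ℂ} {R p : ℝ} (hR : R ≠ 0)
    (hp : 0 < p) (hF : AnalyticOnNhd ℂ F (closedBall c |R|)) :
    ‖F c‖ ^ p ≤ circleAverage (‖F ·‖ ^ p) c R := by
  rcases eq_or_ne (F c) 0 with hc | hc
  · rw [hc, norm_zero, zero_rpow hp.ne']
    exact circleAverage_nonneg_of_nonneg fun z _ ↦ by positivity
  have hlog : CircleIntegrable (Real.log ‖F ·‖) c R :=
    (hF.mono sphere_subset_closedBall).meromorphicOn.circleIntegrable_log_norm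
  have hpow : CircleIntegrable (‖F ·‖ ^ p) c R :=
    ((hF.continuousOn.mono sphere_subset_closedBall).norm.rpow_const
      fun _ _ ↦ Or.inr hp.le).circleIntegrable'
  have hzeros : F ⁻¹' {0}ᶜ ∈ codiscreteWithin (sphere c |R|) :=
    codiscreteWithin_mono sphere_subset_closedBall <| hF.preimage_zero_mem_codiscreteWithin hc
      (mem_closedBall_self (abs_nonneg R)) ((convex_closedBall c |R|).isConnected
        (nonempty_closedBall.2 (abs_nonneg R)))
  -- `log 0 = 0`, so `exp (p * log ‖F z‖)` is `1` rather than `0` at the (discrete) zeros of `F`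
  have hexp : (fun z ↦ exp (p * Real.log ‖F z‖)) =ᶠ[codiscreteWithin (sphere c |R|)]
      (‖F ·‖ ^ p) := by
    filter_upwards [hzeros] with z hz
    rw [rpow_def_of_pos (norm_pos_iff.2 hz), mul_comm]
  calc ‖F c‖ ^ p = exp (p * Real.log ‖F c‖) := by
        rw [rpow_def_of_pos (norm_pos_iff.2 hc), mul_comm]
    _ ≤ exp (circleAverage (fun z ↦ p * Real.log ‖F z‖) c R) := by
        rw [show circleAverage (fun z ↦ p * Real.log ‖F z‖) c R =
          p * circleAverage (Real.log ‖F ·‖) c R from circleAverage_fun_smul (a := p)]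
        gcongr
        exact hF.log_norm_le_circleAverage hR hc
    _ ≤ circleAverage (fun z ↦ exp (p * Real.log ‖F z‖)) c R :=
        convexOn_exp.map_circleAverage_le (hlog.const_fun_smul (a := p))
          (hpow.congr_codiscreteWithin hexp.symm)
    _ = circleAverage (‖F ·‖ ^ p) c R := circleAverage_congr_codiscreteWithin hexp hR

theorem integral_ball_eq_integral_circleAverage {g : ℂ → ℝ} {c : ℂ} {R : ℝ} (hR : 0 ≤ R)
    (hg : ContinuousOn g (closedBall c R)) :
    ∫ w in ball c R, g w = ∫ ρ in 0..R, 2 * π * ρ * circleAverage g c ρ := by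
  have hpolar (q : ℝ × ℝ) : c + Complex.polarCoord.symm q = circleMap c q.1 q.2 := by
    simp [circleMap, Complex.exp_mul_I]
  set S : Set (ℝ × ℝ) := Ioo 0 R ×ˢ Ioo (-π) π
  set φ : ℝ × ℝ → ℝ := fun q ↦ q.1 * g (circleMap c q.1 q.2)
  have hφ : IntegrableOn φ S (volume.prod volume) := by
    refine ContinuousOn.integrableOn_compact (isCompact_Icc.prod isCompact_Icc) ?_ |>.mono_set
      (prod_mono Ioo_subset_Icc_self Ioo_subset_Icc_self)
    refine continuousOn_fst.mul (hg.comp (by fun_prop) fun q hq ↦ ?_)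
    exact closedBall_subset_closedBall hq.1.2 (circleMap_mem_closedBall c hq.1.1 q.2)
  have hS : ∀ q ∈ polarCoord.target,
      q.1 • (ball 0 R).indicator (fun w ↦ g (c + w)) (Complex.polarCoord.symm q) =
        S.indicator φ q := by
    rintro ⟨ρ, θ⟩ ⟨hρ, hθ⟩
    have hρ' : 0 ≤ ρ := le_of_lt hρ
    by_cases hρR : ρ < R
    · rw [indicator_of_mem (by simpa [abs_of_nonneg hρ'] using hρR),
        indicator_of_mem (show (ρ, θ) ∈ S from ⟨⟨hρ, hρR⟩, hθ⟩), hpolar, smul_eq_mul]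
    · rw [indicator_of_notMem (by simpa [abs_of_nonneg hρ'] using hρR),
        indicator_of_notMem (fun h ↦ hρR h.1.2), smul_zero]
  have hcircle : ∀ ρ ∈ Ioo 0 R, ∫ θ in Ioo (-π) π, φ (ρ, θ) = 2 * π * ρ * circleAverage g c ρ := by
    intro ρ _
    rw [circleAverage_eq_integral_add (-π),
      intervalIntegral.integral_comp_add_right (fun θ ↦ g (circleMap c ρ θ)), zero_add,
      show 2 * π + -π = π by ring, smul_eq_mul, ← integral_Ioc_eq_integral_Ioo,
      ← intervalIntegral.integral_of_le (by linarith [pi_pos]), intervalIntegral.integral_const_mul]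
    field_simp
  calc ∫ w in ball c R, g w = ∫ w in ball 0 R, g (c + w) := by
        rw [← (measurePreserving_add_left volume c).setIntegral_preimage_emb
          (measurableEmbedding_addLeft c)]
        congr 1; ext w; simp
    _ = ∫ q in polarCoord.target, q.1 •
          (ball 0 R).indicator (fun w ↦ g (c + w)) (Complex.polarCoord.symm q) := by
        rw [Complex.integral_comp_polarCoord_symm ((ball 0 R).indicator fun w ↦ g (c + w)),
          integral_indicator measurableSet_ball]
    _ = ∫ q in S, φ q := by
        rw [setIntegral_congr_fun polarCoord.open_target.measurableSet hS,
          setIntegral_indicator (measurableSet_Ioo.prod measurableSet_Ioo),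
          polarCoord_target,
          inter_eq_self_of_subset_right (prod_mono Ioo_subset_Ioi_self subset_rfl)]
    _ = ∫ ρ in Ioo 0 R, ∫ θ in Ioo (-π) π, φ (ρ, θ) := setIntegral_prod φ hφ
    _ = ∫ ρ in 0..R, 2 * π * ρ * circleAverage g c ρ := by
        rw [setIntegral_congr_fun measurableSet_Ioo hcircle, intervalIntegral.integral_of_le hR,
          integral_Ioc_eq_integral_Ioo]

theorem DiffContOnCl.pi_mul_sq_mul_norm_rpow_le_integral {F : ℂ → ℂ} {c : ℂ} {R p : ℝ}
    (hR : 0 < R) (hp : 0 < p) (hF : DiffContOnCl ℂ F (ball c R)) :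
    π * R ^ 2 * ‖F c‖ ^ p ≤ ∫ w in ball c R, ‖F w‖ ^ p := by
  have hcont : ContinuousOn (‖F ·‖ ^ p) (closedBall c R) := by
    rw [← closure_ball c hR.ne']
    exact hF.continuousOn.norm.rpow_const fun _ _ ↦ Or.inr hp.le
  have hanalytic : AnalyticOnNhd ℂ F (ball c R) := hF.differentiableOn.analyticOnNhd isOpen_ball
  rw [integral_ball_eq_integral_circleAverage hR.le hcont]
  calc π * R ^ 2 * ‖F c‖ ^ p = ∫ ρ in 0..R, 2 * π * ρ * ‖F c‖ ^ p := by
        rw [intervalIntegral.integral_mul_const, intervalIntegral.integral_const_mul, integral_id]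
        ring
    _ ≤ ∫ ρ in 0..R, 2 * π * ρ * Real.circleAverage (‖F ·‖ ^ p) c ρ := by
        have hmean : ContinuousOn (Real.circleAverage (‖F ·‖ ^ p) c) (Icc 0 R) :=
          (hcont.mono fun z hz ↦ by simpa [dist_eq_norm] using hz.2).circleAverage fun _ h ↦ h.1
        refine intervalIntegral.integral_mono_on_of_le_Ioo hR.le
          ((Continuous.intervalIntegrable (by fun_prop) _ _))
          ((ContinuousOn.intervalIntegrable (by rw [uIcc_of_le hR.le]; fun_prop)))
          fun ρ hρ ↦ mul_le_mul_of_nonneg_left ?_ (by positivity [hρ.1])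
        have hρR : closedBall c |ρ| ⊆ ball c R :=
          closedBall_subset_ball (by rw [abs_of_pos hρ.1]; exact hρ.2)
        exact (hanalytic.mono hρR).norm_rpow_le_circleAverage hρ.1.ne' hp

theorem tendsto_setLIntegral_ball_diff_closedBall {X : Type*} [PseudoMetricSpace X]
    [MeasurableSpace X] [OpensMeasurableSpace X] {μ : Measure X} {H : X → ℝ≥0∞} {c : X} {R : ℝ}
    (h : ∫⁻ x in ball c R, H x ∂μ ≠ ∞) :
    Tendsto (fun s ↦ ∫⁻ x in ball c R \ closedBall c s, H x ∂μ) (𝓝[<] R) (𝓝 0) := by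
  -- As `s ↑ R` the sets decrease, which is continuity from above in the order dual of `ℝ`.
  set A : ℝᵒᵈ → Set X := fun s ↦ ball c R \ closedBall c (OrderDual.ofDual s)
  have hA_meas (s : ℝᵒᵈ) : MeasurableSet (A s) := measurableSet_ball.diff measurableSet_closedBall
  have hempty : (⋂ s > OrderDual.toDual R, A s) = ∅ := by
    refine eq_empty_of_forall_notMem fun x hx ↦ ?_
    have hxR : dist x c < R := (mem_iInter₂.1 hx (OrderDual.toDual (R - 1))
      (OrderDual.toDual_lt_toDual.2 (sub_one_lt R))).1
    exact (mem_iInter₂.1 hx (OrderDual.toDual (dist x c)) (OrderDual.toDual_lt_toDual.2 hxR)).2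
      (mem_closedBall.2 le_rfl)
  have hA : Tendsto (μ.withDensity H ∘ A) (𝓝[>] (OrderDual.toDual R)) (𝓝 0) := by
    rw [← measure_empty (μ := μ.withDensity H), ← hempty]
    refine tendsto_measure_biInter_gt (fun s _ ↦ (hA_meas s).nullMeasurableSet)
      (fun s t _ hst ↦ sdiff_subset_sdiff_right (closedBall_subset_closedBall hst))
      ⟨OrderDual.toDual (R - 1), OrderDual.toDual_lt_toDual.2 (sub_one_lt R), ?_⟩
    rw [withDensity_apply _ (hA_meas _)]
    exact ne_top_of_le_ne_top h (lintegral_mono_set sdiff_subset)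
  exact hA.congr fun s ↦ withDensity_apply _ (hA_meas s)

theorem rpow_le_rpow_abs_mul_rpow_of_le_mul {b x k : ℝ} (hb : 0 < b) (hbx : b ≤ x) (hxk : x ≤ k * b)
    (α : ℝ) : b ^ α ≤ k ^ |α| * x ^ α := by
  have hk : 1 ≤ k := le_of_mul_le_mul_right (by linarith) hb
  have hx : 0 < x := hb.trans_le hbx
  rcases le_total 0 α with hα | hα
  · rw [abs_of_nonneg hα]
    calc b ^ α ≤ x ^ α := rpow_le_rpow hb.le hbx hα
      _ ≤ k ^ α * x ^ α := le_mul_of_one_le_left (by positivity) (one_le_rpow hk hα)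
  · have hk0 : 0 < k := by linarith
    rw [abs_of_nonpos hα]
    calc b ^ α = k ^ (-α) * (k * b) ^ α := by
          rw [mul_rpow hk0.le hb.le, ← mul_assoc, ← rpow_add hk0, neg_add_cancel, rpow_zero,
            one_mul]
      _ ≤ k ^ (-α) * x ^ α :=
          mul_le_mul_of_nonneg_left (rpow_le_rpow_of_nonpos hx hxk hα) (by positivity)

theorem DiffContOnCl.ofReal_mul_norm_rpow_le_lintegral {F : ℂ → ℂ} {c : ℂ} {δ p m : ℝ}
    {W : ℂ → ℝ} (hδ : 0 < δ) (hp : 0 < p) (hm : 0 ≤ m) (hF : DiffContOnCl ℂ F (ball c δ))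
    (hW : ∀ w ∈ ball c δ, m ≤ W w) :
    ENNReal.ofReal (m * (π * δ ^ 2 * ‖F c‖ ^ p)) ≤
      ∫⁻ w in ball c δ, ENNReal.ofReal (‖F w‖ ^ p * W w) := by
  have hcont : ContinuousOn (‖F ·‖ ^ p) (closedBall c δ) := by
    rw [← closure_ball c hδ.ne']
    exact hF.continuousOn.norm.rpow_const fun _ _ ↦ Or.inr hp.le
  have hint : IntegrableOn (fun w ↦ m * ‖F w‖ ^ p) (ball c δ) :=
    ((hcont.integrableOn_compact (isCompact_closedBall c δ)).mono_set
      ball_subset_closedBall).const_mul m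
  calc ENNReal.ofReal (m * (π * δ ^ 2 * ‖F c‖ ^ p))
      ≤ ENNReal.ofReal (∫ w in ball c δ, m * ‖F w‖ ^ p) := by
        rw [integral_const_mul]
        gcongr
        exact hF.pi_mul_sq_mul_norm_rpow_le_integral hδ hp
    _ = ∫⁻ w in ball c δ, ENNReal.ofReal (m * ‖F w‖ ^ p) :=
        ofReal_integral_eq_lintegral_ofReal hint (ae_of_all _ fun w ↦ by positivity)
    _ ≤ ∫⁻ w in ball c δ, ENNReal.ofReal (‖F w‖ ^ p * W w) := by
        refine lintegral_mono_ae ?_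
        filter_upwards [ae_restrict_mem measurableSet_ball] with w hw
        rw [mul_comm]
        exact ENNReal.ofReal_le_ofReal (by gcongr; exact hW w hw)

theorem DifferentiableOn.ofReal_one_sub_rpow_mul_norm_rpow_le_lintegral {f : ℂ → ℂ}
    (hf : DifferentiableOn ℂ f (ball 0 1)) {p : ℝ} (hp : 0 < p) (α : ℝ) {z : ℂ} (hz : ‖z‖ < 1) :
    ENNReal.ofReal ((1 - ‖z‖) ^ (α + 2) * ‖f z‖ ^ p) ≤
      ENNReal.ofReal (2 ^ (α + 2) * 6 ^ |α| / π) *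
        ∫⁻ w in ball 0 1 \ closedBall 0 ((3 * ‖z‖ - 1) / 2),
          ENNReal.ofReal (‖f w‖ ^ p * (1 - ‖w‖ ^ 2) ^ α) := by
  set δ := (1 - ‖z‖) / 2 with hδ_def
  have hδ : 0 < δ := by linarith
  have hnorm (w : ℂ) : |‖w‖ - ‖z‖| ≤ ‖w - z‖ := abs_norm_sub_norm_le w z
  have hclosed : closedBall z δ ⊆ ball 0 1 := fun w hw ↦ mem_ball_zero_iff.2 <| by
    linarith [(abs_le.1 (hnorm w)).2, mem_closedBall_iff_norm.1 hw]
  have hannulus : ball z δ ⊆ ball 0 1 \ closedBall 0 ((3 * ‖z‖ - 1) / 2) := fun w hw ↦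
    ⟨hclosed (ball_subset_closedBall hw), fun hw' ↦ by
      linarith [(abs_le.1 (hnorm w)).1, mem_ball_iff_norm.1 hw, mem_closedBall_zero_iff.1 hw']⟩
  -- `δ ≤ 1 - ‖w‖ ≤ 3δ` and `1 ≤ 1 + ‖w‖ ≤ 2` on the disc, so `δ ≤ 1 - ‖w‖² ≤ 6δ`
  have hweight : ∀ w ∈ ball z δ, δ ^ α ≤ 6 ^ |α| * (1 - ‖w‖ ^ 2) ^ α := fun w hw ↦ by
    obtain ⟨h1, h2⟩ := abs_le.1 (hnorm w)
    have := mem_ball_iff_norm.1 hw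
    refine rpow_le_rpow_abs_mul_rpow_of_le_mul hδ ?_ ?_ α <;> nlinarith [norm_nonneg w]
  have hlocal := (hf.diffContOnCl_ball hclosed).ofReal_mul_norm_rpow_le_lintegral hδ hp
    (by positivity) hweight
  calc ENNReal.ofReal ((1 - ‖z‖) ^ (α + 2) * ‖f z‖ ^ p)
      = ENNReal.ofReal (2 ^ (α + 2) / π) * ENNReal.ofReal (δ ^ α * (π * δ ^ 2 * ‖f z‖ ^ p)) := by
        rw [← ENNReal.ofReal_mul (by positivity), show 1 - ‖z‖ = 2 * δ by ring,
          mul_rpow zero_le_two hδ.le, rpow_add hδ, rpow_two]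
        field_simp
    _ ≤ ENNReal.ofReal (2 ^ (α + 2) / π) * ∫⁻ w in ball z δ,
          ENNReal.ofReal (6 ^ |α|) * ENNReal.ofReal (‖f w‖ ^ p * (1 - ‖w‖ ^ 2) ^ α) := by
        gcongr
        refine hlocal.trans_eq (lintegral_congr fun w ↦ ?_)
        rw [← ENNReal.ofReal_mul (by positivity)]
        ring_nf
    _ ≤ _ := by
        rw [lintegral_const_mul' _ _ ENNReal.ofReal_ne_top, ← mul_assoc,
          ← ENNReal.ofReal_mul (by positivity)]
        gcongr
        exact le_of_eq (by ring)

theorem maxMod_nonneg (f : ℂ → ℂ) (r : ℝ) : 0 ≤ maxMod f r :=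
  Real.sSup_nonneg (by rintro _ ⟨z, -, rfl⟩; exact norm_nonneg _)

theorem exists_mem_sphere_norm_eq_maxMod {f : ℂ → ℂ} {r : ℝ} (hr : 0 ≤ r)
    (hf : ContinuousOn f (sphere 0 r)) : ∃ z ∈ sphere (0 : ℂ) r, ‖f z‖ = maxMod f r := by
  obtain ⟨z, hz, h⟩ := (isCompact_sphere (0 : ℂ) r).exists_sSup_image_eq
    (NormedSpace.sphere_nonempty.2 hr) hf.norm
  exact ⟨z, hz, h.symm⟩

theorem DiffContOnCl.norm_le_maxMod {f : ℂ → ℂ} {r : ℝ} (hr : 0 < r)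
    (hf : DiffContOnCl ℂ f (ball 0 r)) {x : ℂ} (hx : x ∈ closedBall 0 r) : ‖f x‖ ≤ maxMod f r := by
  have hsphere : ContinuousOn f (sphere 0 r) :=
    hf.continuousOn.mono (by rw [closure_ball 0 hr.ne']; exact sphere_subset_closedBall)
  have hbdd : BddAbove ((‖f ·‖) '' sphere 0 r) :=
    ((isCompact_sphere 0 r).image_of_continuousOn hsphere.norm).bddAbove
  refine Complex.norm_le_of_forall_mem_frontier_norm_le isBounded_ball hf (fun z hz ↦ ?_)
    (by rwa [closure_ball 0 hr.ne'])
  rw [frontier_ball 0 hr.ne'] at hz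
  exact le_csSup hbdd (mem_image_of_mem _ hz)

theorem DiffContOnCl.psiArea_le {f : ℂ → ℂ} {r : ℝ} (hr : 0 < r)
    (hf : DiffContOnCl ℂ f (ball 0 r)) : psiArea f r ≤ π * maxMod f r ^ 2 := by
  have himage : f '' ball 0 r ⊆ closedBall 0 (maxMod f r) := by
    rintro _ ⟨x, hx, rfl⟩
    exact mem_closedBall_zero_iff.2 (hf.norm_le_maxMod hr (ball_subset_closedBall hx))
  calc psiArea f r ≤ (volume (closedBall (0 : ℂ) (maxMod f r))).toReal :=
        ENNReal.toReal_mono measure_closedBall_lt_top.ne (measure_mono himage)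
    _ = π * maxMod f r ^ 2 := by
        simp [Complex.volume_closedBall, ENNReal.toReal_ofReal (maxMod_nonneg f r), mul_comm]

theorem tendsto_zero_of_ofReal_le {ι : Type*} {l : Filter ι} {a : ι → ℝ} {b : ι → ℝ≥0∞}
    (ha : ∀ᶠ i in l, 0 ≤ a i) (hab : ∀ᶠ i in l, ENNReal.ofReal (a i) ≤ b i)
    (hb : Tendsto b l (𝓝 0)) : Tendsto a l (𝓝 0) := by
  have : Tendsto (fun i ↦ ENNReal.ofReal (a i)) l (𝓝 0) :=
    tendsto_of_tendsto_of_tendsto_of_le_of_le' tendsto_const_nhds hb (.of_forall fun _ ↦ zero_le)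
      hab
  refine ((ENNReal.tendsto_toReal ENNReal.zero_ne_top).comp this).congr' ?_
  filter_upwards [ha] with i hi using ENNReal.toReal_ofReal hi

theorem tendsto_mul_rpow_div_of_tendsto_rpow_mul {ι : Type*} {l : Filter ι} {a g : ι → ℝ}
    {p q : ℝ} (hq : 0 < q) (ha : ∀ᶠ i in l, 0 ≤ a i) (hg : ∀ᶠ i in l, 0 ≤ g i)
    (h : Tendsto (fun i ↦ a i ^ q * g i ^ p) l (𝓝 0)) :
    Tendsto (fun i ↦ a i * g i ^ (p / q)) l (𝓝 0) := by
  have := h.rpow_const (p := q⁻¹) (Or.inr (inv_pos.2 hq).le)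
  rw [zero_rpow (inv_pos.2 hq).ne'] at this
  refine this.congr' ?_
  filter_upwards [ha, hg] with i hai hgi
  rw [mul_rpow (by positivity) (by positivity), ← rpow_mul hai, ← rpow_mul hgi,
    mul_inv_cancel₀ hq.ne', rpow_one, div_eq_mul_inv]

theorem DifferentiableOn.tendsto_one_sub_rpow_mul_maxMod_rpow {f : ℂ → ℂ}
    (hf : DifferentiableOn ℂ f (ball 0 1)) {p α : ℝ} (hp : 0 < p) (hB : MemBergman f p α) :
    Tendsto (fun r ↦ (1 - r) ^ (α + 2) * maxMod f r ^ p) (𝓝[<] 1) (𝓝 0) := by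
  have hnear : ∀ᶠ r in 𝓝[<] (1 : ℝ), r ∈ Ioo 0 1 := Ioo_mem_nhdsLT one_pos
  have hshift : Tendsto (fun r : ℝ ↦ (3 * r - 1) / 2) (𝓝[<] 1) (𝓝[<] 1) := by
    refine tendsto_nhdsWithin_of_tendsto_nhds_of_eventually_within _
      ((Continuous.tendsto' (by fun_prop) 1 1 (by norm_num)).mono_left nhdsWithin_le_nhds) ?_
    filter_upwards [hnear] with r hr
    exact show (3 * r - 1) / 2 < 1 by linarith [hr.2]
  have htail := ENNReal.Tendsto.const_mul
    ((tendsto_setLIntegral_ball_diff_closedBall hB.ne).comp hshift)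
    (Or.inr (ENNReal.ofReal_ne_top (r := 2 ^ (α + 2) * 6 ^ |α| / π)))
  rw [mul_zero] at htail
  refine tendsto_zero_of_ofReal_le ?_ ?_ htail
  · filter_upwards [hnear] with r hr
    exact mul_nonneg (rpow_nonneg (by linarith [hr.2]) _) (rpow_nonneg (maxMod_nonneg f r) _)
  · filter_upwards [hnear] with r hr
    obtain ⟨z, hz, hzM⟩ := exists_mem_sphere_norm_eq_maxMod hr.1.le
      (hf.continuousOn.mono (sphere_subset_ball hr.2))
    rw [mem_sphere_zero_iff_norm] at hz
    have := hf.ofReal_one_sub_rpow_mul_norm_rpow_le_lintegral hp α (hz ▸ hr.2)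
    rwa [hz, hzM] at this

theorem DifferentiableOn.tendsto_one_sub_rpow_mul_psiArea_rpow {f : ℂ → ℂ}
    (hf : DifferentiableOn ℂ f (ball 0 1)) {p q : ℝ} (hp : 0 ≤ p)
    (h : Tendsto (fun r ↦ (1 - r) ^ q * maxMod f r ^ p) (𝓝[<] 1) (𝓝 0)) :
    Tendsto (fun r ↦ (1 - r) ^ q * psiArea f r ^ (p / 2)) (𝓝[<] 1) (𝓝 0) := by
  refine squeeze_zero' ?_ ?_ (by simpa using h.const_mul (π ^ (p / 2)))
  · filter_upwards [self_mem_nhdsWithin] with r (hr : r < 1)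
    exact mul_nonneg (rpow_nonneg (by linarith) _) (rpow_nonneg ENNReal.toReal_nonneg _)
  · filter_upwards [Ioo_mem_nhdsLT one_pos] with r hr
    have hψ := (hf.diffContOnCl_ball (closedBall_subset_ball hr.2)).psiArea_le hr.1
    calc (1 - r) ^ q * psiArea f r ^ (p / 2)
        ≤ (1 - r) ^ q * (π * maxMod f r ^ 2) ^ (p / 2) := by
          have : 0 ≤ 1 - r := by linarith [hr.2]
          gcongr
          exact ENNReal.toReal_nonneg
      _ = π ^ (p / 2) * ((1 - r) ^ q * maxMod f r ^ p) := by
          rw [mul_rpow pi_pos.le (by positivity), ← rpow_natCast, ← rpow_mul (maxMod_nonneg f r)]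
          ring_nf

/-- if a conformal `f` is in `A_α^p(𝔻)`, then
`(1-r)·M(r)^{p/(α+2)} → 0` and `(1-r)·ψ(r)^{p/(2(α+2))} → 0` as `r → 1⁻`. -/
theorem tendsto_zero_of_memBergman (f : ℂ → ℂ) (hf : IsConformalOnDisk f)
    (p α : ℝ) (hp : 0 < p) (hα : -1 < α) (hB : MemBergman f p α) :
    Filter.Tendsto (fun r : ℝ => (1 - r) * maxMod f r ^ (p / (α + 2)))
      (nhdsWithin (1:ℝ) (Set.Iio 1)) (nhds 0) ∧
    Filter.Tendsto (fun r : ℝ => (1 - r) * psiArea f r ^ (p / (2 * (α + 2))))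
      (nhdsWithin (1:ℝ) (Set.Iio 1)) (nhds 0) := by
  have hd : DifferentiableOn ℂ f (ball 0 1) := hf.2
  have hα2 : 0 < α + 2 := by linarith
  have h1r : ∀ᶠ r in 𝓝[<] (1 : ℝ), 0 ≤ 1 - r := by
    filter_upwards [self_mem_nhdsWithin] with r (hr : r < 1) using by linarith
  have hM := hd.tendsto_one_sub_rpow_mul_maxMod_rpow hp hB
  refine ⟨tendsto_mul_rpow_div_of_tendsto_rpow_mul hα2 h1r
    (.of_forall fun r ↦ maxMod_nonneg f r) hM, ?_⟩
  have hψ := tendsto_mul_rpow_div_of_tendsto_rpow_mul hα2 h1r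
    (.of_forall fun _ ↦ ENNReal.toReal_nonneg) (hd.tendsto_one_sub_rpow_mul_psiArea_rpow hp.le hM)
  rwa [div_div] at hψ
end
end

section
/- For every z in the open unit disk 𝔻 of ℂ, Re[ (Log(2e/(1-z)))^{-1/2} − (1/2)·(Log(2e/(1-z)))^{-3/2} ] > 0, where Log is the principal branch of the complex logarithm and w^{-1/2}, w^{-3/2} are defined using the principal branch of the square root (these branches are well defined here since 2e/(1-z) lies in the half-plane {Re w > e}, so Log(2e/(1-z)) lies in {Re w > 1}). -/
open MeasureTheory Filter Set
open scoped ENNReal Real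

noncomputable section

/-!
Put `L = Log(2e/(1-z))` and `u = L^{1/2}`. Since `|1 - z| < 2`, `|2e/(1-z)| > e`, so `Re L > 1`;
hence `|arg L| < π/2`, so `Re u > 0`, and `|u|² = |L| > 1`. The expression is
`u⁻¹ - u⁻³/2`, whose real part is `Re u · (2|u|⁴ - (Re u)² + 3(Im u)²) / (2|u|⁶)`,
and the middle factor is positive as soon as `|u|² > 1/2`.
-/

namespace Complex

theorem re_inv_sub_half_inv_pow_three_pos {u : ℂ} (hre : 0 < u.re) (hnorm : 1 / 2 < normSq u) :
    0 < (u⁻¹ - 1 / 2 * (u ^ 3)⁻¹).re := by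
  have hre3 : (u ^ 3).re = u.re ^ 3 - 3 * u.re * u.im ^ 2 := by
    simp only [pow_succ, pow_zero, one_mul, mul_re, mul_im]; ring
  have hN : 0 < normSq u := by positivity
  have hre_eq : (u⁻¹ - 1 / 2 * (u ^ 3)⁻¹).re
      = u.re * (2 * normSq u ^ 2 - u.re ^ 2 + 3 * u.im ^ 2) / (2 * normSq u ^ 3) := by
    rw [sub_re, one_div, ← ofReal_ofNat, ← ofReal_inv, re_ofReal_mul, inv_re, inv_re, map_pow,
      hre3]
    field_simp
    ring
  have hre_sq : u.re ^ 2 ≤ normSq u := by rw [normSq_apply]; nlinarith [sq_nonneg u.im]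
  have hfactor : 0 < 2 * normSq u ^ 2 - u.re ^ 2 + 3 * u.im ^ 2 := by
    nlinarith [sq_nonneg u.im]
  rw [hre_eq]
  positivity

theorem re_cpow_one_half_pos {L : ℂ} (hL : 0 < L.re) : 0 < (L ^ (1 / 2 : ℂ)).re := by
  have hL0 : L ≠ 0 := fun h => by simp [h] at hL
  have harg : |L.arg| < π / 2 := abs_arg_lt_pi_div_two_iff.mpr (Or.inl hL)
  have him : (log L * (1 / 2)).im = L.arg / 2 := by simp [log_im, div_eq_mul_inv]
  rw [cpow_def_of_ne_zero hL0, exp_re, him]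
  refine mul_pos (Real.exp_pos _) (Real.cos_pos_of_mem_Ioo ⟨?_, ?_⟩) <;>
    linarith [abs_lt.mp harg, Real.pi_pos]

theorem normSq_cpow_one_half (L : ℂ) : normSq (L ^ (1 / 2 : ℂ)) = ‖L‖ := by
  rw [normSq_eq_norm_sq, ← norm_pow]
  simp

theorem cpow_neg_three_halves (L : ℂ) : L ^ (-(3 / 2) : ℂ) = ((L ^ (1 / 2 : ℂ)) ^ 3)⁻¹ := by
  rw [cpow_neg, ← cpow_nat_mul]
  norm_num

theorem one_lt_re_log_of_exp_one_lt_norm {w : ℂ} (hw : Real.exp 1 < ‖w‖) : 1 < (log w).re := by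
  rw [log_re, ← Real.log_exp 1]
  exact Real.log_lt_log (Real.exp_pos 1) hw

theorem exp_one_lt_norm_two_exp_one_div_one_sub {z : ℂ} (hz : ‖z‖ < 1) :
    Real.exp 1 < ‖((2 * Real.exp 1 : ℝ) : ℂ) / (1 - z)‖ := by
  have h2 : ‖1 - z‖ < 2 := (norm_sub_le 1 z).trans_lt (by simp; linarith)
  have h0 : 0 < ‖1 - z‖ := norm_pos_iff.mpr (sub_ne_zero.mpr fun h => by simp [← h] at hz)
  rw [norm_div, norm_real, Real.norm_of_nonneg (by positivity), lt_div_iff₀ h0]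
  nlinarith [Real.exp_pos 1]

end Complex

/-- for every `z ∈ 𝔻`,
`Re[(Log(2e/(1-z)))^{-1/2} - (1/2)(Log(2e/(1-z)))^{-3/2}] > 0`, where `Log` and the powers
are taken with the principal branch. -/
theorem re_pos_log_powers (z : ℂ) (hz : z ∈ Metric.ball (0:ℂ) 1) :
    0 < ((Complex.log (((2 * Real.exp 1 : ℝ) : ℂ) / (1 - z))) ^ (-(1/2) : ℂ)
      - (1/2 : ℂ) * (Complex.log (((2 * Real.exp 1 : ℝ) : ℂ) / (1 - z))) ^ (-(3/2) : ℂ)).re := by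
  set L := Complex.log (((2 * Real.exp 1 : ℝ) : ℂ) / (1 - z))
  have hL : 1 < L.re := Complex.one_lt_re_log_of_exp_one_lt_norm <|
    Complex.exp_one_lt_norm_two_exp_one_div_one_sub (mem_ball_zero_iff.mp hz)
  rw [Complex.cpow_neg, Complex.cpow_neg_three_halves]
  refine Complex.re_inv_sub_half_inv_pow_three_pos (Complex.re_cpow_one_half_pos (by linarith)) ?_
  rw [Complex.normSq_cpow_one_half]
  linarith [Complex.re_le_norm L]
end
end
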